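/- For each simple root α_i, the conjugated Hecke operator 𝔗_i satisfies 1 + 𝔗_i = (1 − qπ^{α_i∨})∘∂_i if α_i ∈ Φ⁺₋₁, and 1 + 𝔗_i = ∂_i∘(1 − qπ^{α_i∨}) if α_i ∈ Φ⁺_q, as operators on Frac(R), where (1 − qπ^{α_i∨}) denotes the multiplication operator. -/

import Mathlib

open scoped Classical

noncomputable section
namespace BBF

abbrev Lat (n : ℕ) := Fin n → ℤ

instance addAutGroupOld (A : Type) [Add A] : Group (AddAut A) where
  mul g h := AddEquiv.trans h g
  one := AddEquiv.refl _
  inv := AddEquiv.symm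
  mul_assoc _ _ _ := rfl
  one_mul _ := rfl
  mul_one _ := rfl
  inv_mul_cancel := AddEquiv.self_trans_symm

abbrev RootT (n : ℕ) := (Lat n) × ((Lat n) →+ ℤ)

def rneg {n : ℕ} (α : RootT n) : RootT n := (-α.1, -α.2)

def reflAut' {n : ℕ} (a : Lat n) (f : (Lat n) →+ ℤ) : AddAut (Lat n) :=
  if h : f a = 2 then
    { toFun := fun v => v - f v • a
      invFun := fun v => v - f v • a
      left_inv := by
        intro v
        have hf : f (v - f v • a) = - f v := by
          rw [map_sub, map_zsmul, smul_eq_mul, h]; ring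
        simp only [hf, neg_smul, sub_neg_eq_add, sub_add_cancel]
      right_inv := by
        intro v
        have hf : f (v - f v • a) = - f v := by
          rw [map_sub, map_zsmul, smul_eq_mul, h]; ring
        simp only [hf, neg_smul, sub_neg_eq_add, sub_add_cancel]
      map_add' := by
        intro x y
        simp only [map_add, add_smul]
        abel }
  else 1

def ract {n : ℕ} (u : AddAut (Lat n)) (α : RootT n) : RootT n :=
  (u α.1, α.2.comp u.symm.toAddMonoidHom)

/-- The raw data of a based root system on the coweight lattice `ℤⁿ`:
the set of roots `Φ`, the positive roots `pos`, the simple roots, (half the sum of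
the positive coroots) `rho`, and the longest Weyl group element `w0`.  Each root is
recorded as the pair (coroot, pairing functional ⟨α, ·⟩). -/
structure PreCtx (n : ℕ) where
  Φ : Finset (RootT n)
  pos : Finset (RootT n)
  simple : Fin n → RootT n
  rho : Lat n
  w0 : AddAut (Lat n)

variable {n : ℕ}

/-- The simple reflections. -/
def PreCtx.sref (C : PreCtx n) (i : Fin n) : AddAut (Lat n) :=
  reflAut' (C.simple i).1 (C.simple i).2

/-- The Weyl group, generated by the simple reflections. -/
def PreCtx.W (C : PreCtx n) : Subgroup (AddAut (Lat n)) :=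
  Subgroup.closure (Set.range C.sref)

/-- The product `s_{i₁} ⋯ s_{i_k}` attached to a word in the simple reflections. -/
def PreCtx.wordProd (C : PreCtx n) (l : List (Fin n)) : AddAut (Lat n) :=
  (l.map C.sref).prod

/-- The length of a Weyl group element: the minimal length of an expression as a
product of simple reflections. -/
def PreCtx.len (C : PreCtx n) (w : AddAut (Lat n)) : ℕ :=
  sInf {k | ∃ l : List (Fin n), C.wordProd l = w ∧ l.length = k}

/-- `l` is a reduced word for `w`. -/
def PreCtx.IsReduced (C : PreCtx n) (w : AddAut (Lat n)) (l : List (Fin n)) : Prop :=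
  C.wordProd l = w ∧ l.length = C.len w

/-- A choice of reduced word for each Weyl group element. -/
def PreCtx.redWord (C : PreCtx n) (w : AddAut (Lat n)) : List (Fin n) :=
  if h : ∃ l, C.IsReduced w l then h.choose else []

/-- The axioms making `C : PreCtx n` a (reduced crystallographic) based root system:
`⟨α, α∨⟩ = 2`; `Φ = Φ⁺ ⊔ (−Φ⁺)`; the simple roots are positive; `Φ` is stable under the
simple reflections, and `s_i` permutes the positive roots other than `α_i`; every positive
root is Weyl-conjugate to a simple root; `2ρ∨` is the sum of the positive coroots; the Weyl
group is finite with longest element `w0`. -/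
structure IsRootCtx (C : PreCtx n) : Prop where
  pairing_self : ∀ α ∈ C.Φ, α.2 α.1 = 2
  pos_subset : C.pos ⊆ C.Φ
  simple_mem : ∀ i, C.simple i ∈ C.pos
  simple_inj : Function.Injective C.simple
  neg_mem : ∀ α ∈ C.Φ, rneg α ∈ C.Φ
  pos_decomp : C.Φ = C.pos ∪ C.pos.image rneg
  pos_disj : Disjoint C.pos (C.pos.image rneg)
  refl_stable : ∀ i, ∀ α ∈ C.Φ, ract (C.sref i) α ∈ C.Φ
  refl_pos : ∀ i, ∀ α ∈ C.pos, α ≠ C.simple i → ract (C.sref i) α ∈ C.pos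
  simple_conj : ∀ α ∈ C.pos, ∃ w ∈ C.W, ∃ i, ract w (C.simple i) = α
  rho_spec : (2 : ℤ) • C.rho = ∑ α ∈ C.pos, α.1
  Wfin : (C.W : Set (AddAut (Lat n))).Finite
  w0_mem : C.w0 ∈ C.W
  w0_max : ∀ w ∈ C.W, C.len w ≤ C.len C.w0

/-- A Hecke character datum: the set `neg1 = Φ⁺₋₁` of positive roots on which the character
acts by `−1` (the complement `pos \ neg1 = Φ⁺_q` acts by `q`), such that
`Φ⁺₋₁ ∪ (−Φ⁺₋₁)` and `Φ⁺_q ∪ (−Φ⁺_q)` are stable under the Weyl group. -/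
structure IsEps (C : PreCtx n) (neg1 : Finset (RootT n)) : Prop where
  subset : neg1 ⊆ C.pos
  stable_neg1 : ∀ w ∈ C.W, ∀ α : RootT n, (α ∈ neg1 ∨ rneg α ∈ neg1) →
      (ract w α ∈ neg1 ∨ rneg (ract w α) ∈ neg1)
  stable_q : ∀ w ∈ C.W, ∀ α : RootT n, (α ∈ C.pos \ neg1 ∨ rneg α ∈ C.pos \ neg1) →
      (ract w α ∈ C.pos \ neg1 ∨ rneg (ract w α) ∈ C.pos \ neg1)


section Alg

/-- `ℂ[q,q⁻¹]`, the ring of Laurent polynomials in `q` over `ℂ`. -/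
abbrev LP := LaurentPolynomial ℂ

/-- The group algebra `k[P∨]` of the coweight lattice. -/
abbrev Rng (k : Type) [CommRing k] (n : ℕ) : Type := AddMonoidAlgebra k (Lat n)

instance (k : Type) [CommRing k] [IsDomain k] (n : ℕ) : IsDomain (Rng k n) :=
  NoZeroDivisors.to_isDomain _

variable (k : Type) [CommRing k] {n : ℕ}

/-- The basis element `π^μ` of the group algebra. -/
def piR (μ : Lat n) : Rng k n := AddMonoidAlgebra.single μ 1

/-- `q` as an element of `ℂ[q,q⁻¹][P∨]`. -/
def qR (n : ℕ) : Rng LP n := AddMonoidAlgebra.single 0 (LaurentPolynomial.T 1)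

/-- The ring automorphism of `k[P∨]` induced by an automorphism of `P∨`. -/
def actR (u : AddAut (Lat n)) : Rng k n ≃ₐ[k] Rng k n :=
  AddMonoidAlgebra.domCongr k k u

variable (K : Type) [Field K]

/-- The image of `π^μ` in the fraction field of `k[P∨]`. -/
def piK [Algebra (Rng k n) K] (μ : Lat n) : K := algebraMap (Rng k n) K (piR k μ)

/-- The image of `q` in the fraction field of `ℂ[q,q⁻¹][P∨]`. -/
def qK (n : ℕ) [Algebra (Rng LP n) K] : K := algebraMap (Rng LP n) K (qR n)

/-- The field endomorphism of the fraction field of `k[P∨]` induced by an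
automorphism of `P∨` (e.g. a Weyl group element). -/
def actK [Algebra (Rng k n) K] [IsFractionRing (Rng k n) K] (u : AddAut (Lat n)) : K →+* K :=
  IsFractionRing.lift
    (g := (algebraMap (Rng k n) K).comp ((actR k u : Rng k n ≃+* Rng k n) : Rng k n →+* Rng k n))
    (by
      rw [RingHom.coe_comp]
      exact (IsFractionRing.injective (Rng k n) K).comp (actR k u).injective)

end Alg

section GenericOps

variable (k : Type) [CommRing k] {n : ℕ}
variable (K : Type) [Field K] [Algebra (Rng k n) K] [IsFractionRing (Rng k n) K]
variable (C : PreCtx n)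

/-- The Demazure operator `∂_i f = (π^{−α_i∨}·f − s_i(f))/(π^{−α_i∨} − 1)` on `Frac(k[P∨])`. -/
def Dem (i : Fin n) (f : K) : K :=
  (piK k K (-(C.simple i).1) * f - actK k K (C.sref i) f) / (piK k K (-(C.simple i).1) - 1)

/-- The composite `∂_{i₁} ∘ ⋯ ∘ ∂_{i_k}` of Demazure operators along a word. -/
def Demword (l : List (Fin n)) : K → K :=
  l.foldr (fun i F => fun f => Dem k K C i (F f)) id

/-- The operator `𝔇_i = ∂_i − 1`. -/
def DD (i : Fin n) (f : K) : K := Dem k K C i f - f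

/-- The composite `𝔇_{i₁} ∘ ⋯ ∘ 𝔇_{i_k}` along a word. -/
def DDword (l : List (Fin n)) : K → K :=
  l.foldr (fun i F => fun f => DD k K C i (F f)) id

/-- `𝔇_w`, computed using a chosen reduced word for `w`. -/
def DDw (w : AddAut (Lat n)) : K → K := DDword k K C (C.redWord w)

/-- The alternator `𝒜 = ∑_{w ∈ W} (−1)^{ℓ(w)} w` as an operator. -/
def Alt (f : K) : K :=
  ∑ᶠ w ∈ (C.W : Set (AddAut (Lat n))), (-1 : K) ^ (C.len w) * actK k K w f

end GenericOps

section HeckeOps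

variable {n : ℕ}
variable (K : Type) [Field K] [Algebra (Rng LP n) K] [IsFractionRing (Rng LP n) K]
variable (C : PreCtx n)

/-- The Hecke operator `T_i` attached to the character datum `neg1`:
`T_i f = (ε_i + (1−q)/(1−π^{−α_i∨}))·s_i(f) + ((q−1)/(1−π^{−α_i∨}))·f`,
where `ε_i = −1` if `α_i ∈ Φ⁺₋₁` and `ε_i = q` otherwise. -/
def Ti (neg1 : Finset (RootT n)) (i : Fin n) (f : K) : K :=
  ((if C.simple i ∈ neg1 then (-1 : K) else qK K n)
      + (1 - qK K n) / (1 - piK LP K (-(C.simple i).1))) * actK LP K (C.sref i) f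
    + ((qK K n - 1) / (1 - piK LP K (-(C.simple i).1))) * f

/-- The composite `T_{i₁} ∘ ⋯ ∘ T_{i_k}` along a word. -/
def Tword (neg1 : Finset (RootT n)) (l : List (Fin n)) : K → K :=
  l.foldr (fun i F => fun f => Ti K C neg1 i (F f)) id

/-- `T_w`, computed using a chosen reduced word for `w`. -/
def Tw (neg1 : Finset (RootT n)) (w : AddAut (Lat n)) : K → K :=
  Tword K C neg1 (C.redWord w)

/-- The conjugated Hecke operator `𝔗_i = π^{ρ∨_ε} ∘ T_i ∘ π^{−ρ∨_ε}`. -/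
def Tfrak (neg1 : Finset (RootT n)) (rE : Lat n) (i : Fin n) (f : K) : K :=
  piK LP K rE * Ti K C neg1 i (piK LP K (-rE) * f)

/-- The composite `𝔗_{i₁} ∘ ⋯ ∘ 𝔗_{i_k}` along a word. -/
def Tfrakword (neg1 : Finset (RootT n)) (rE : Lat n) (l : List (Fin n)) : K → K :=
  l.foldr (fun i F => fun f => Tfrak K C neg1 rE i (F f)) id

/-- `𝔗_w`, computed using a chosen reduced word for `w`. -/
def TfrakW (neg1 : Finset (RootT n)) (rE : Lat n) (w : AddAut (Lat n)) : K → K :=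
  Tfrakword K C neg1 rE (C.redWord w)

/-- The operator `∑_{w ∈ W} 𝔗_w`. -/
def SumTfrak (neg1 : Finset (RootT n)) (rE : Lat n) (f : K) : K :=
  ∑ᶠ w ∈ (C.W : Set (AddAut (Lat n))), TfrakW K C neg1 rE w f

/-- The multiplication operator `∏_{α ∈ S} (1 − q π^{α∨})` for a set `S` of roots. -/
def Dprod (S : Finset (RootT n)) : K := ∏ α ∈ S, (1 - qK K n * piK LP K α.1)

/-- The operator `Ω' = D₋₁^{−1} ∘ (∑_{w∈W} 𝔗_w) ∘ D_q^{−1}`. -/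
def Omega' (neg1 : Finset (RootT n)) (rE : Lat n) (f : K) : K :=
  (Dprod K neg1)⁻¹ * SumTfrak K C neg1 rE ((Dprod K (C.pos \ neg1))⁻¹ * f)

end HeckeOps

/-! The identities reduce to a rational-function computation in `q`, `x = π^{-α_i∨}`,
`π^{-ρ∨_ε}` and `s_i f`, once one knows how `s_i` moves `π^{-ρ∨_ε}`: the pairing
`⟨α_i, ρ∨_ε⟩` is `1` if `α_i ∈ Φ⁺₋₁` and `0` otherwise. This holds because `s_i` permutes
`Φ⁺₋₁ \ {α_i}` (it permutes `Φ⁺ \ {α_i}` and stabilises `±Φ⁺₋₁`), so it fixes the sum of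
their coroots, whose pairing with `α_i` must therefore vanish. -/

section Reflection

variable {a : Lat n} {f : Lat n →+ ℤ}

lemma reflAut'_apply (h : f a = 2) (v : Lat n) : reflAut' a f v = v - f v • a := by
  rw [reflAut', dif_pos h]
  rfl

lemma reflAut'_apply_self (h : f a = 2) : reflAut' a f a = -a := by
  rw [reflAut'_apply h, h]
  abel

lemma apply_reflAut' (h : f a = 2) (v : Lat n) : f (reflAut' a f v) = -f v := by
  rw [reflAut'_apply h, map_sub, map_zsmul, h, smul_eq_mul]
  ring

lemma reflAut'_reflAut' (h : f a = 2) (v : Lat n) : reflAut' a f (reflAut' a f v) = v := by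
  rw [reflAut'_apply h (reflAut' a f v), apply_reflAut' h, reflAut'_apply h, neg_smul,
    sub_neg_eq_add, sub_add_cancel]

lemma reflAut'_symm_apply (h : f a = 2) (v : Lat n) :
    (reflAut' a f).symm v = reflAut' a f v := by
  rw [AddEquiv.symm_apply_eq, reflAut'_reflAut' h]

lemma eq_zero_of_reflAut'_apply_eq (h : f a = 2) {v : Lat n} (hv : reflAut' a f v = v) :
    f v = 0 := by
  have := apply_reflAut' h v
  rw [hv] at this
  omega

lemma ract_reflAut'_ract_reflAut' (h : f a = 2) (α : RootT n) :
    ract (reflAut' a f) (ract (reflAut' a f) α) = α := by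
  refine Prod.ext (reflAut'_reflAut' h α.1) (AddMonoidHom.ext fun v => ?_)
  change α.2 ((reflAut' a f).symm ((reflAut' a f).symm v)) = α.2 v
  rw [reflAut'_symm_apply h, reflAut'_symm_apply h, reflAut'_reflAut' h]

lemma ract_reflAut'_self (h : f a = 2) : ract (reflAut' a f) (a, f) = rneg (a, f) := by
  refine Prod.ext (reflAut'_apply_self h) (AddMonoidHom.ext fun v => ?_)
  change f ((reflAut' a f).symm v) = -f v
  rw [reflAut'_symm_apply h, apply_reflAut' h]

end Reflection

section FractionField

variable (k : Type) [CommRing k] (K : Type) [Field K]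

lemma piK_add [Algebra (Rng k n) K] (a b : Lat n) :
    piK k K (a + b) = piK k K a * piK k K b := by
  rw [piK, piK, piK, piR, piR, piR, ← map_mul, AddMonoidAlgebra.single_mul_single, one_mul]

lemma piK_zero [Algebra (Rng k n) K] : piK k K (0 : Lat n) = 1 := by
  rw [piK, piR, ← AddMonoidAlgebra.one_def, map_one]

lemma piK_neg_mul_piK [Algebra (Rng k n) K] (a : Lat n) : piK k K (-a) * piK k K a = 1 := by
  rw [← piK_add, neg_add_cancel, piK_zero]

lemma piK_ne_zero [Algebra (Rng k n) K] (a : Lat n) : piK k K a ≠ 0 :=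
  right_ne_zero_of_mul_eq_one (piK_neg_mul_piK k K a)

lemma piK_eq_inv_piK_neg [Algebra (Rng k n) K] (a : Lat n) : piK k K a = (piK k K (-a))⁻¹ :=
  eq_inv_of_mul_eq_one_right (piK_neg_mul_piK k K a)

lemma piK_ne_one [Nontrivial k] [Algebra (Rng k n) K] [IsFractionRing (Rng k n) K]
    {a : Lat n} (ha : a ≠ 0) : piK k K a ≠ 1 := by
  rw [piK, ← map_one (algebraMap (Rng k n) K), Ne,
    (IsFractionRing.injective (Rng k n) K).eq_iff, piR, AddMonoidAlgebra.one_def,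
    AddMonoidAlgebra.single, AddMonoidAlgebra.single, AddMonoidAlgebra.ofCoeff_inj,
    Finsupp.single_eq_single_iff]
  rintro (⟨rfl, -⟩ | ⟨h, -⟩)
  exacts [ha rfl, one_ne_zero h]

variable [Algebra (Rng k n) K] [IsFractionRing (Rng k n) K]

lemma actK_algebraMap (u : AddAut (Lat n)) (x : Rng k n) :
    actK k K u (algebraMap (Rng k n) K x) = algebraMap (Rng k n) K (actR k u x) :=
  IsFractionRing.lift_algebraMap _ x

lemma actK_piK (u : AddAut (Lat n)) (a : Lat n) : actK k K u (piK k K a) = piK k K (u a) := by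
  rw [piK, actK_algebraMap, piK, piR, piR, actR, AddMonoidAlgebra.domCongr_single]

lemma actK_qK [Algebra (Rng LP n) K] [IsFractionRing (Rng LP n) K] (u : AddAut (Lat n)) :
    actK LP K u (qK K n) = qK K n := by
  rw [qK, actK_algebraMap, qR, actR, AddMonoidAlgebra.domCongr_single, map_zero]

end FractionField

section RootSystem

variable {C : PreCtx n} {neg1 : Finset (RootT n)}

lemma IsRootCtx.pairing_simple (hC : IsRootCtx C) (i : Fin n) :
    (C.simple i).2 (C.simple i).1 = 2 :=
  hC.pairing_self _ (hC.pos_subset (hC.simple_mem i))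

lemma IsRootCtx.rneg_notMem_pos (hC : IsRootCtx C) {α : RootT n} (hα : α ∈ C.pos) :
    rneg α ∉ C.pos :=
  fun h => Finset.disjoint_left.mp hC.pos_disj h (Finset.mem_image_of_mem rneg hα)

lemma PreCtx.sref_mem_W (C : PreCtx n) (i : Fin n) : C.sref i ∈ C.W :=
  Subgroup.subset_closure ⟨i, rfl⟩

lemma IsEps.ract_sref_mem_erase (hE : IsEps C neg1) (hC : IsRootCtx C) (i : Fin n)
    {α : RootT n} (hα : α ∈ neg1.erase (C.simple i)) :
    ract (C.sref i) α ∈ neg1.erase (C.simple i) := by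
  obtain ⟨hne, hα⟩ := Finset.mem_erase.mp hα
  have hpos : ract (C.sref i) α ∈ C.pos := hC.refl_pos i α (hE.subset hα) hne
  refine Finset.mem_erase.mpr ⟨fun hsimple => ?_, ?_⟩
  · have hα_neg : α = rneg (C.simple i) := by
      rw [← ract_reflAut'_ract_reflAut' (hC.pairing_simple i) α]
      change ract (C.sref i) (ract (C.sref i) α) = _
      rw [hsimple]
      exact ract_reflAut'_self (hC.pairing_simple i)
    exact hC.rneg_notMem_pos (hC.simple_mem i) (hα_neg ▸ hE.subset hα)
  · refine (hE.stable_neg1 _ (C.sref_mem_W i) α (Or.inl hα)).resolve_right fun hneg => ?_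
    exact hC.rneg_notMem_pos hpos (hE.subset hneg)

lemma IsEps.sref_sum_erase (hE : IsEps C neg1) (hC : IsRootCtx C) (i : Fin n) :
    C.sref i (∑ α ∈ neg1.erase (C.simple i), α.1) = ∑ α ∈ neg1.erase (C.simple i), α.1 := by
  have hinv := ract_reflAut'_ract_reflAut' (hC.pairing_simple i)
  rw [map_sum]
  exact Finset.sum_nbij' (ract (C.sref i)) (ract (C.sref i))
    (fun _ hα => hE.ract_sref_mem_erase hC i hα) (fun _ hα => hE.ract_sref_mem_erase hC i hα)
    (fun α _ => hinv α) (fun α _ => hinv α) (fun _ _ => rfl)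

lemma IsEps.pairing_simple_rho (hE : IsEps C neg1) (hC : IsRootCtx C) {rE : Lat n}
    (hrE : (2 : ℤ) • rE = ∑ α ∈ neg1, α.1) (i : Fin n) :
    (C.simple i).2 rE = if C.simple i ∈ neg1 then 1 else 0 := by
  have h2 := hC.pairing_simple i
  have herase : (C.simple i).2 (∑ α ∈ neg1.erase (C.simple i), α.1) = 0 :=
    eq_zero_of_reflAut'_apply_eq h2 (hE.sref_sum_erase hC i)
  have htwo := congrArg (C.simple i).2 hrE
  rw [map_zsmul, smul_eq_mul] at htwo
  split_ifs with hmem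
  · rw [← Finset.add_sum_erase _ _ hmem, map_add, h2, herase] at htwo
    omega
  · rw [← Finset.erase_eq_of_notMem hmem, herase] at htwo
    omega

end RootSystem

section HeckeIdentities

variable (K : Type) [Field K] [Algebra (Rng LP n) K] [IsFractionRing (Rng LP n) K]
variable {C : PreCtx n} {neg1 : Finset (RootT n)} {rE : Lat n} {i : Fin n}

lemma piK_neg_simple_ne_one (h2 : (C.simple i).2 (C.simple i).1 = 2) :
    piK LP K (-(C.simple i).1) ≠ 1 :=
  piK_ne_one LP K (neg_ne_zero.mpr fun h0 => by simp [h0] at h2)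

lemma one_add_Tfrak_of_mem (h2 : (C.simple i).2 (C.simple i).1 = 2)
    (hc : (C.simple i).2 rE = 1) (hmem : C.simple i ∈ neg1) (f : K) :
    f + Tfrak K C neg1 rE i f = (1 - qK K n * piK LP K (C.simple i).1) * Dem LP K C i f := by
  have hx1 := sub_ne_zero.mpr (piK_neg_simple_ne_one K h2)
  have h1x := sub_ne_zero.mpr (piK_neg_simple_ne_one K h2).symm
  have hsrE : C.sref i (-rE) = -rE + (C.simple i).1 := by
    rw [PreCtx.sref, reflAut'_apply h2, map_neg, hc]
    abel
  rw [Tfrak, Ti, Dem, if_pos hmem, map_mul, actK_piK, hsrE, piK_add,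
    piK_eq_inv_piK_neg LP K rE, piK_eq_inv_piK_neg LP K (C.simple i).1]
  have hr0 := piK_ne_zero LP K (-rE)
  have hx0 := piK_ne_zero LP K (-(C.simple i).1)
  field_simp
  ring

lemma one_add_Tfrak_of_notMem (h2 : (C.simple i).2 (C.simple i).1 = 2)
    (hc : (C.simple i).2 rE = 0) (hmem : C.simple i ∉ neg1) (f : K) :
    f + Tfrak K C neg1 rE i f = Dem LP K C i ((1 - qK K n * piK LP K (C.simple i).1) * f) := by
  have hx1 := sub_ne_zero.mpr (piK_neg_simple_ne_one K h2)
  have h1x := sub_ne_zero.mpr (piK_neg_simple_ne_one K h2).symm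
  have hsrE : C.sref i (-rE) = -rE := by
    rw [PreCtx.sref, reflAut'_apply h2, map_neg, hc, neg_zero, zero_smul, sub_zero]
  have hsa : C.sref i (C.simple i).1 = -(C.simple i).1 := reflAut'_apply_self h2
  rw [Tfrak, Ti, Dem, if_neg hmem, map_mul, map_mul, map_sub, map_one, map_mul, actK_qK,
    actK_piK, actK_piK, hsrE, hsa, piK_eq_inv_piK_neg LP K rE,
    piK_eq_inv_piK_neg LP K (C.simple i).1]
  have hr0 := piK_ne_zero LP K (-rE)
  have hx0 := piK_ne_zero LP K (-(C.simple i).1)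
  field_simp
  ring

end HeckeIdentities

/-- for each simple root `α_i`, the conjugated Hecke operator `𝔗_i`
satisfies `1 + 𝔗_i = (1 − qπ^{α_i∨}) ∘ ∂_i` if `α_i ∈ Φ⁺₋₁`, and
`1 + 𝔗_i = ∂_i ∘ (1 − qπ^{α_i∨})` if `α_i ∈ Φ⁺_q`, as operators on `Frac(R)`. -/
theorem statement4 (n : ℕ) (C : PreCtx n) (hC : IsRootCtx C)
    (neg1 : Finset (RootT n)) (hE : IsEps C neg1)
    (K : Type) [Field K] [Algebra (Rng LP n) K] [IsFractionRing (Rng LP n) K]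
    (rE : Lat n) (hrE : (2 : ℤ) • rE = ∑ α ∈ neg1, α.1) :
    ∀ (i : Fin n) (f : K),
      (C.simple i ∈ neg1 →
        f + Tfrak K C neg1 rE i f
          = (1 - qK K n * piK LP K ((C.simple i).1)) * Dem LP K C i f)
      ∧ (C.simple i ∈ C.pos \ neg1 →
        f + Tfrak K C neg1 rE i f
          = Dem LP K C i ((1 - qK K n * piK LP K ((C.simple i).1)) * f)) := by
  intro i f
  have hc := hE.pairing_simple_rho hC hrE i
  refine ⟨fun hmem => ?_, fun hmem => ?_⟩
  · exact one_add_Tfrak_of_mem K (hC.pairing_simple i) (by rwa [if_pos hmem] at hc) hmem f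
  · have hmem := (Finset.mem_sdiff.mp hmem).2
    exact one_add_Tfrak_of_notMem K (hC.pairing_simple i) (by rwa [if_neg hmem] at hc) hmem f

end BBF

end
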